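/- Fix points v₁, v₂ ∈ ℝ² and unit vectors n₁, n₂ ∈ ℝ². For x ∈ ℝ² define the distances d₁(x) = (v₁ − x)·n₁ and d₂(x) = (v₂ − x)·n₂, the scaled normals ñ₁(x) = n₁/d₁(x) and ñ₂(x) = n₂/d₂(x), and the weight function w(x) = det(ñ₁(x), ñ₂(x)), where det(a,b) = a₁b₂ − a₂b₁. Let x₀ ∈ ℝ² be a point with d₁(x₀) ≠ 0, d₂(x₀) ≠ 0 and det(n₁, n₂) ≠ 0. Then w is differentiable at x₀, w(x₀) ≠ 0, and ∇w(x₀) = w(x₀) ( ñ₁(x₀) + ñ₂(x₀) ), i.e. the ratio function R(x₀) = ∇w(x₀)/w(x₀) equals ñ₁(x₀) + ñ₂(x₀). -/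

import Mathlib

/-!
Bilinearity of the determinant gives `w = det(n₁, n₂) · d₁⁻¹ · d₂⁻¹`. Since `dᵢ` is affine with
gradient `-nᵢ`, the reciprocal `dᵢ⁻¹` has gradient `dᵢ⁻¹ • ñᵢ`, and logarithmic gradients add
over products, so `∇w = w • (ñ₁ + ñ₂)`.
-/

open InnerProductSpace RealInnerProductSpace

section GradientCalculus

variable {F : Type*} [NormedAddCommGroup F] [InnerProductSpace ℝ F] [CompleteSpace F]
  {f g : F → ℝ} {f' g' x : F}

theorem HasGradientAt.const_mul (c : ℝ) (hf : HasGradientAt f f' x) :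
    HasGradientAt (fun y => c * f y) (c • f') x := by
  rw [hasGradientAt_iff_hasFDerivAt, map_smul] at *
  exact hf.const_mul c

theorem HasGradientAt.mul (hf : HasGradientAt f f' x) (hg : HasGradientAt g g' x) :
    HasGradientAt (fun y => f y * g y) (f x • g' + g x • f') x := by
  rw [hasGradientAt_iff_hasFDerivAt, map_add, map_smul, map_smul] at *
  exact hf.mul hg

theorem HasDerivAt.comp_hasGradientAt {h : ℝ → ℝ} {h' : ℝ} (hh : HasDerivAt h h' (f x))
    (hf : HasGradientAt f f' x) : HasGradientAt (h ∘ f) (h' • f') x := by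
  rw [hasGradientAt_iff_hasFDerivAt, map_smul] at *
  exact hh.comp_hasFDerivAt x hf

theorem HasGradientAt.inv (hf : HasGradientAt f f' x) (hx : f x ≠ 0) :
    HasGradientAt (fun y => (f y)⁻¹) (-(f x ^ 2)⁻¹ • f') x :=
  (hasDerivAt_inv hx).comp_hasGradientAt hf

theorem HasGradientAt.mul_of_smul {a b : F} (hf : HasGradientAt f (f x • a) x)
    (hg : HasGradientAt g (g x • b) x) :
    HasGradientAt (fun y => f y * g y) ((f x * g x) • (a + b)) x := by
  convert hf.mul hg using 1
  module

theorem hasGradientAt_inner_sub_left (v n x : F) :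
    HasGradientAt (fun y => ⟪v - y, n⟫) (-n) x := by
  have h := ((toDual ℝ F n).hasFDerivAt (x := x)).const_sub ⟪v, n⟫
  rw [hasGradientAt_iff_hasFDerivAt, map_neg]
  refine h.congr_of_eventuallyEq (Filter.Eventually.of_forall fun y => ?_)
  simp only [toDual_apply_apply, inner_sub_left, real_inner_comm]

theorem hasGradientAt_inv_inner_sub_left {v n x : F} (hx : ⟪v - x, n⟫ ≠ 0) :
    HasGradientAt (fun y => ⟪v - y, n⟫⁻¹) (⟪v - x, n⟫⁻¹ • ⟪v - x, n⟫⁻¹ • n) x := by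
  convert (hasGradientAt_inner_sub_left v n x).inv hx using 1
  field_simp
  module

end GradientCalculus

open EuclideanSpace in
theorem wachspress_weight_gradient_general
    (v₁ v₂ n₁ n₂ x₀ : EuclideanSpace ℝ (Fin 2))
    (hd₁ : (inner ℝ (v₁ - x₀) n₁ : ℝ) ≠ 0)
    (hd₂ : (inner ℝ (v₂ - x₀) n₂ : ℝ) ≠ 0)
    (hdet : n₁ 0 * n₂ 1 - n₁ 1 * n₂ 0 ≠ 0) :
    let d₁ : EuclideanSpace ℝ (Fin 2) → ℝ := fun x => inner ℝ (v₁ - x) n₁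
    let d₂ : EuclideanSpace ℝ (Fin 2) → ℝ := fun x => inner ℝ (v₂ - x) n₂
    let nt₁ : EuclideanSpace ℝ (Fin 2) → EuclideanSpace ℝ (Fin 2) :=
      fun x => (d₁ x)⁻¹ • n₁
    let nt₂ : EuclideanSpace ℝ (Fin 2) → EuclideanSpace ℝ (Fin 2) :=
      fun x => (d₂ x)⁻¹ • n₂
    let w : EuclideanSpace ℝ (Fin 2) → ℝ :=
      fun x => nt₁ x 0 * nt₂ x 1 - nt₁ x 1 * nt₂ x 0
    w x₀ ≠ 0 ∧ HasGradientAt w (w x₀ • (nt₁ x₀ + nt₂ x₀)) x₀ := by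
  intro d₁ d₂ nt₁ nt₂ w
  have hw : w = fun x => (n₁ 0 * n₂ 1 - n₁ 1 * n₂ 0) * ((d₁ x)⁻¹ * (d₂ x)⁻¹) := by
    funext x
    simp only [w, nt₁, nt₂, PiLp.smul_apply, smul_eq_mul]
    ring
  rw [hw]
  refine ⟨mul_ne_zero hdet (mul_ne_zero (inv_ne_zero hd₁) (inv_ne_zero hd₂)), ?_⟩
  rw [← smul_smul]
  exact ((hasGradientAt_inv_inner_sub_left hd₁).mul_of_smul
    (hasGradientAt_inv_inner_sub_left hd₂)).const_mul _

open EuclideanSpace in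
/-- For the Wachspress weight `w(x) = det(ñ₁(x), ñ₂(x))` built from
distances `dᵢ(x) = (vᵢ − x)·nᵢ` and scaled normals `ñᵢ(x) = nᵢ/dᵢ(x)`, at a point
`x₀` with `d₁(x₀) ≠ 0`, `d₂(x₀) ≠ 0` and `det(n₁,n₂) ≠ 0` one has `w(x₀) ≠ 0`,
`w` is differentiable at `x₀`, and `∇w(x₀) = w(x₀)(ñ₁(x₀) + ñ₂(x₀))`. -/
theorem wachspress_weight_gradient
    (v₁ v₂ n₁ n₂ x₀ : EuclideanSpace ℝ (Fin 2))
    (hn₁ : ‖n₁‖ = 1) (hn₂ : ‖n₂‖ = 1)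
    (hd₁ : (inner ℝ (v₁ - x₀) n₁ : ℝ) ≠ 0)
    (hd₂ : (inner ℝ (v₂ - x₀) n₂ : ℝ) ≠ 0)
    (hdet : n₁ 0 * n₂ 1 - n₁ 1 * n₂ 0 ≠ 0) :
    let d₁ : EuclideanSpace ℝ (Fin 2) → ℝ := fun x => inner ℝ (v₁ - x) n₁
    let d₂ : EuclideanSpace ℝ (Fin 2) → ℝ := fun x => inner ℝ (v₂ - x) n₂
    let nt₁ : EuclideanSpace ℝ (Fin 2) → EuclideanSpace ℝ (Fin 2) :=
      fun x => (d₁ x)⁻¹ • n₁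
    let nt₂ : EuclideanSpace ℝ (Fin 2) → EuclideanSpace ℝ (Fin 2) :=
      fun x => (d₂ x)⁻¹ • n₂
    let w : EuclideanSpace ℝ (Fin 2) → ℝ :=
      fun x => nt₁ x 0 * nt₂ x 1 - nt₁ x 1 * nt₂ x 0
    w x₀ ≠ 0 ∧ HasGradientAt w (w x₀ • (nt₁ x₀ + nt₂ x₀)) x₀ :=
  wachspress_weight_gradient_general v₁ v₂ n₁ n₂ x₀ hd₁ hd₂ hdet
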